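/- For every linked pair (P,Q), sign(P,Q) ∈ {1,-1}; i.e., the sign is never zero. -/

import Mathlib

/-!
Combinatorial model of the Goldman–Turaev Lie bialgebra of curves on a surface
with boundary, following M. Chas, "Combinatorial Lie bialgebras of curves on
surfaces".

The alphabet `𝔸ₙ = {a₁,…,aₙ, ā₁,…,āₙ}` is modelled by `Letter n := Fin n × Bool`,
with the bar involution flipping the boolean.  Linear words are lists of letters;
a cyclic word is a list up to rotation (`List.IsRotated`).
-/

open List

abbrev Letter (n : ℕ) := Fin n × Bool

namespace ChasCW

variable {n : ℕ}

/-- The bar involution `x ↦ x̄` on letters. -/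
def bar (x : Letter n) : Letter n := (x.1, !x.2)

/-- The formal inverse `W̄` of a linear word `W`. -/
def wordInv (w : List (Letter n)) : List (Letter n) := (w.map bar).reverse

/-- A linear word is freely reduced if no letter is followed by its inverse. -/
def Reduced (w : List (Letter n)) : Prop := w.Chain' (fun a b => b ≠ bar a)

/-- A nonempty word all of whose cyclic rotations are freely reduced:
a representative of a reduced cyclic word. -/
def CyclicallyReduced (w : List (Letter n)) : Prop :=
  w ≠ [] ∧ ∀ i, Reduced (w.rotate i)

/-- The type of cyclic words: lists of letters up to rotation. -/
abbrev CWord (n : ℕ) := Quotient (List.IsRotated.setoid (Letter n))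

/-- The cyclic word `c(w)` determined by a linear word `w`. -/
def cw (w : List (Letter n)) : CWord n := Quotient.mk _ w

/-- A surface symbol: a reduced cyclic word containing every letter of the
alphabet exactly once. -/
def SurfaceSymbol (O : List (Letter n)) : Prop :=
  CyclicallyReduced O ∧ ∀ x : Letter n, O.count x = 1

/-- `w` embeds injectively and orientation-preservingly as a cyclic subsequence
of the cyclic word `O`. -/
def CyclicEmbeds (w O : List (Letter n)) : Prop :=
  w.Nodup ∧ ∃ i ≤ w.length, ∃ j ≤ O.length, (w.rotate i).Sublist (O.rotate j)

open Classical in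
/-- The orientation `o(w) ∈ {-1,0,1}` of a cyclic word relative to the surface
symbol `O`: `1` for an orientation-preserving embedding of rings, `-1` for an
orientation-reversing one, `0` otherwise. -/
noncomputable def orient (O w : List (Letter n)) : ℤ :=
  if CyclicEmbeds w O then 1 else if CyclicEmbeds w O.reverse then -1 else 0

/-- Case (1) of Definition 2.1: `P = p₁p₂`, `Q = q₁q₂` and
`o(c(p̄₁q̄₁p₂q₂)) ≠ 0`. -/
def Linked1 (O : List (Letter n)) (p₁ p₂ q₁ q₂ : Letter n) : Prop :=
  Reduced [p₁, p₂] ∧ Reduced [q₁, q₂] ∧ orient O [bar p₁, bar q₁, p₂, q₂] ≠ 0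

/-- Case (2) of Definition 2.1: `P = p₁Yp₂`, `Q = q₁Yq₂`, `p₁ ≠ q₁`, `p₂ ≠ q₂`,
`Y = x₁X x₂` nonempty, and `o(c(p̄₁q̄₁x₁)) = o(c(p₂q₂x̄₂))`. -/
def Linked2 (O : List (Letter n)) (p₁ p₂ q₁ q₂ x₁ x₂ : Letter n)
    (Y : List (Letter n)) : Prop :=
  Y ≠ [] ∧ Y.head? = some x₁ ∧ Y.getLast? = some x₂ ∧
  p₁ ≠ q₁ ∧ p₂ ≠ q₂ ∧
  Reduced (p₁ :: (Y ++ [p₂])) ∧ Reduced (q₁ :: (Y ++ [q₂])) ∧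
  orient O [bar p₁, bar q₁, x₁] = orient O [p₂, q₂, bar x₂]

/-- Case (3) of Definition 2.1: `P = p₁Yp₂`, `Q = q₁Ȳq₂`, `p₁ ≠ q̄₂`, `p₂ ≠ q̄₁`,
`Y = x₁X x₂` nonempty, and `o(c(q₂p̄₁x₁)) = o(c(q̄₁p₂x̄₂))`. -/
def Linked3 (O : List (Letter n)) (p₁ p₂ q₁ q₂ x₁ x₂ : Letter n)
    (Y : List (Letter n)) : Prop :=
  Y ≠ [] ∧ Y.head? = some x₁ ∧ Y.getLast? = some x₂ ∧
  p₁ ≠ bar q₂ ∧ p₂ ≠ bar q₁ ∧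
  Reduced (p₁ :: (Y ++ [p₂])) ∧ Reduced (q₁ :: (wordInv Y ++ [q₂])) ∧
  orient O [q₂, bar p₁, x₁] = orient O [bar q₁, p₂, bar x₂]

/-- `(P,Q)` is an `O`-linked pair (Definition 2.1). -/
def LinkedPair (O P Q : List (Letter n)) : Prop :=
  (∃ p₁ p₂ q₁ q₂, P = [p₁, p₂] ∧ Q = [q₁, q₂] ∧ Linked1 O p₁ p₂ q₁ q₂) ∨
  (∃ p₁ p₂ q₁ q₂ x₁ x₂ Y, P = p₁ :: (Y ++ [p₂]) ∧ Q = q₁ :: (Y ++ [q₂]) ∧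
    Linked2 O p₁ p₂ q₁ q₂ x₁ x₂ Y) ∨
  (∃ p₁ p₂ q₁ q₂ x₁ x₂ Y, P = p₁ :: (Y ++ [p₂]) ∧ Q = q₁ :: (wordInv Y ++ [q₂]) ∧
    Linked3 O p₁ p₂ q₁ q₂ x₁ x₂ Y)

/-- The sign of a linked pair `(P,Q)`, computed from the (unique) decomposition
of `P` and `Q` prescribed by Definition 2.1. -/
noncomputable def signLP (O P Q : List (Letter n)) : ℤ :=
  match P, Q with
  | p₁ :: P', q₁ :: Q' =>
    match P'.getLast?, Q'.getLast? with
    | some p₂, some q₂ =>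
      let Y := P'.dropLast
      let Z := Q'.dropLast
      if Y = [] then orient O [bar p₁, bar q₁, p₂, q₂]
      else
        match Y.head?, Y.getLast? with
        | some x₁, some _ =>
          if Z = wordInv Y then orient O [q₂, bar p₁, x₁]
          else orient O [bar p₁, bar q₁, x₁]
        | _, _ => 0
    | _, _ => 0
  | _, _ => 0

/-- The subword of length `l` of (a large power of) the cyclic word `V`,
starting at position `i`.  This encodes occurrences of subwords of powers
of `V`. -/
def segment (V : List (Letter n)) (i l : ℕ) : List (Letter n) :=
  (((List.replicate (l + 1) V).flatten).rotate i).take l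

/-- The set `LP₁(W)` of linked pairs of occurrences of subwords of `W`,
an occurrence being encoded by its starting position and its length. -/
def LP1 (O W : List (Letter n)) : Set ((ℕ × ℕ) × (ℕ × ℕ)) :=
  {e | e.1.1 < W.length ∧ e.2.1 < W.length ∧ e.1.2 ≤ W.length ∧ e.2.2 ≤ W.length ∧
    LinkedPair O (segment W e.1.1 e.1.2) (segment W e.2.1 e.2.2)}

/-- The set `LP₂(V,W)` of linked pairs of the pair of cyclic words `(V,W)`:
pairs of occurrences of subwords of powers of `V` resp. `W` which are linked.
(The normalization `len V^{j-1} < len P ≤ len V^j` is implicit in the encoding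
of an occurrence by a starting position `< len V` and a length.) -/
def LP2 (O V W : List (Letter n)) : Set ((ℕ × ℕ) × (ℕ × ℕ)) :=
  {e | e.1.1 < V.length ∧ e.2.1 < W.length ∧
    LinkedPair O (segment V e.1.1 e.1.2) (segment W e.2.1 e.2.2)}

end ChasCW

/-!
In cases (2) and (3) of Definition 2.1 the sign is the orientation of a three-letter word whose
letters are pairwise distinct because `P` and `Q` are reduced; three distinct letters of the
surface symbol `O` lie on it in one of the two cyclic orders, so the orientation is `±1`.
That case (2) is not read as case (3) rests on a nonempty reduced word never being its own
inverse. In case (1) the sign is nonzero by definition of linkedness.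
-/

namespace List

variable {α : Type*}

theorem IsRotated.exists_le_length_rotate_eq {l l' : List α} (h : l ~r l') :
    ∃ i ≤ l.length, l.rotate i = l' := by
  obtain ⟨k, rfl⟩ := h
  rcases eq_or_ne l [] with rfl | hl
  · exact ⟨0, le_rfl, by simp⟩
  · exact ⟨k % l.length, (Nat.mod_lt _ (length_pos_iff.2 hl)).le, rotate_mod l k⟩

theorem pair_sublist_or_pair_sublist_of_mem {b c : α} {l : List α} (hb : b ∈ l) (hc : c ∈ l)
    (hbc : b ≠ c) : [b, c] <+ l ∨ [c, b] <+ l := by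
  obtain ⟨s, t, rfl⟩ := append_of_mem hb
  rcases mem_append.1 hc with hs | ht
  · exact Or.inr ((singleton_sublist.2 hs).append (singleton_sublist.2 mem_cons_self))
  · have ht : c ∈ t := (mem_cons.1 ht).resolve_left hbc.symm
    exact Or.inl ((cons_sublist_cons.2 (singleton_sublist.2 ht)).trans (sublist_append_right s _))

end List

namespace ChasCW

variable {n : ℕ}

@[simp]
theorem bar_bar (x : Letter n) : bar (bar x) = x := by
  simp [bar]

theorem bar_ne_self (x : Letter n) : bar x ≠ x := by
  simp [bar, Prod.ext_iff]

theorem bar_injective : Function.Injective (bar : Letter n → Letter n) :=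
  Function.LeftInverse.injective bar_bar

theorem Reduced.getElem_succ_ne_bar {w : List (Letter n)} (hw : Reduced w) (i : ℕ)
    (hi : i + 1 < w.length) : w[i + 1] ≠ bar w[i] :=
  List.isChain_iff_getElem.1 hw i hi

theorem Reduced.ne_bar_of_head?_eq {p x : Letter n} {w : List (Letter n)}
    (h : Reduced (p :: w)) (hx : w.head? = some x) : x ≠ bar p := by
  obtain ⟨t, rfl⟩ := List.head?_eq_some_iff.1 hx
  exact (List.isChain_cons_cons.1 h).1

theorem Reduced.ne_bar_of_getLast?_eq {x z : Letter n} {w : List (Letter n)}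
    (h : Reduced (w ++ [z])) (hx : w.getLast? = some x) : z ≠ bar x := by
  obtain ⟨t, rfl⟩ := List.getLast?_eq_some_iff.1 hx
  exact (List.isChain_append.1 h).2.2 x (by simp) z (by simp)

theorem getLast?_wordInv (w : List (Letter n)) : (wordInv w).getLast? = w.head?.map bar := by
  simp [wordInv]

theorem getElem_of_eq_wordInv {w : List (Letter n)} (h : w = wordInv w) (i : ℕ)
    (hi : i < w.length) : w[i] = bar (w[w.length - 1 - i]'(by omega)) := by
  rw [List.getElem_of_eq h hi]
  simp [wordInv, List.getElem_reverse]

/-- A word `w = x₀ ⋯ x_{k-1}` with `w = w̄` has `x_m = x̄_{m-1}` if `k = 2m`, and `x_m = x̄_m`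
if `k = 2m + 1`. -/
theorem Reduced.ne_wordInv {w : List (Letter n)} (hw : Reduced w) (hne : w ≠ []) :
    w ≠ wordInv w := by
  intro h
  have hpos := List.length_pos_iff.2 hne
  obtain ⟨m, hm | hm⟩ := Nat.even_or_odd' w.length
  · have hmid := getElem_of_eq_wordInv h m (by omega)
    simp only [show w.length - 1 - m = m - 1 by omega] at hmid
    exact hw.getElem_succ_ne_bar (m - 1) (by omega) (by simpa [show m - 1 + 1 = m by omega])
  · have hmid := getElem_of_eq_wordInv h m (by omega)
    simp only [show w.length - 1 - m = m by omega] at hmid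
    exact bar_ne_self _ hmid.symm

theorem cyclicEmbeds_of_isRotated_sublist {w w' O O' : List (Letter n)} (hw : w.Nodup)
    (hww' : w ~r w') (hOO' : O ~r O') (h : w' <+ O') : CyclicEmbeds w O := by
  obtain ⟨i, hi, rfl⟩ := hww'.exists_le_length_rotate_eq
  obtain ⟨j, hj, rfl⟩ := hOO'.exists_le_length_rotate_eq
  exact ⟨hw, i, hi, j, hj, h⟩

theorem cyclicEmbeds_or_cyclicEmbeds_reverse_of_mem {O : List (Letter n)} {a b c : Letter n}
    (ha : a ∈ O) (hb : b ∈ O) (hc : c ∈ O) (hab : a ≠ b) (hac : a ≠ c) (hbc : b ≠ c) :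
    CyclicEmbeds [a, b, c] O ∨ CyclicEmbeds [a, b, c] O.reverse := by
  have hnd : [a, b, c].Nodup := by simp [hab, hac, hbc]
  obtain ⟨s, t, rfl⟩ := List.append_of_mem ha
  have hrot : s ++ a :: t ~r a :: (t ++ s) := by simpa using List.isRotated_append (l' := a :: t)
  have hmem {x : Letter n} (hx : x ∈ s ++ a :: t) (hxa : a ≠ x) : x ∈ t ++ s :=
    (List.mem_cons.1 (hrot.mem_iff.1 hx)).resolve_left hxa.symm
  rcases List.pair_sublist_or_pair_sublist_of_mem (hmem hb hab) (hmem hc hac) hbc with h | h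
  · exact Or.inl (cyclicEmbeds_of_isRotated_sublist hnd (.refl _) hrot (h.cons_cons a))
  · refine Or.inr (cyclicEmbeds_of_isRotated_sublist hnd ⟨1, rfl⟩ hrot.reverse ?_)
    simpa using (h.cons_cons a).reverse

theorem orient_eq_one_or_neg_one_of_ne_zero {O w : List (Letter n)} (h : orient O w ≠ 0) :
    orient O w = 1 ∨ orient O w = -1 := by
  unfold orient at *
  split_ifs at * <;> simp_all

theorem SurfaceSymbol.mem {O : List (Letter n)} (hO : SurfaceSymbol O) (x : Letter n) :
    x ∈ O :=
  List.count_pos_iff.1 (by rw [hO.2 x]; exact one_pos)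

theorem SurfaceSymbol.orient_eq_one_or_neg_one {O : List (Letter n)} (hO : SurfaceSymbol O)
    {a b c : Letter n} (hab : a ≠ b) (hac : a ≠ c) (hbc : b ≠ c) :
    orient O [a, b, c] = 1 ∨ orient O [a, b, c] = -1 := by
  apply orient_eq_one_or_neg_one_of_ne_zero
  unfold orient
  rcases cyclicEmbeds_or_cyclicEmbeds_reverse_of_mem (hO.mem a) (hO.mem b) (hO.mem c)
    hab hac hbc with h | h <;> split_ifs <;> simp_all

theorem signLP_pair (O : List (Letter n)) (p₁ p₂ q₁ q₂ : Letter n) :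
    signLP O [p₁, p₂] [q₁, q₂] = orient O [bar p₁, bar q₁, p₂, q₂] := by
  simp [signLP]

theorem signLP_cons_append_singleton (O : List (Letter n)) {Y : List (Letter n)}
    (Z : List (Letter n)) (p₁ p₂ q₁ q₂ : Letter n) {x₁ : Letter n} (hY : Y ≠ [])
    (hx₁ : Y.head? = some x₁) :
    signLP O (p₁ :: (Y ++ [p₂])) (q₁ :: (Z ++ [q₂])) =
      if Z = wordInv Y then orient O [q₂, bar p₁, x₁] else orient O [bar p₁, bar q₁, x₁] := by
  simp [signLP, hY, hx₁, List.getLast?_eq_some_getLast hY]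

/-- Lemma 2.6(a): for every linked pair `(P,Q)` the sign is
never zero: `sign(P,Q) ∈ {1,-1}`. -/
theorem sign_of_linked_pair_ne_zero {n : ℕ} (O P Q : List (Letter n))
    (hO : SurfaceSymbol O) (h : LinkedPair O P Q) :
    signLP O P Q = 1 ∨ signLP O P Q = -1 := by
  rcases h with ⟨p₁, p₂, q₁, q₂, rfl, rfl, -, -, hne⟩ |
    ⟨p₁, p₂, q₁, q₂, x₁, -, Y, rfl, rfl, hY, hx₁, -, hpq₁, -, hP, hQ, -⟩ |
    ⟨p₁, p₂, q₁, q₂, x₁, -, Y, rfl, rfl, hY, hx₁, -, hpq₂, -, hP, hQ, -⟩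
  · rw [signLP_pair]
    exact orient_eq_one_or_neg_one_of_ne_zero hne
  · have hYinv : Y ≠ wordInv Y := Reduced.ne_wordInv (hP.infix ⟨[p₁], [p₂], rfl⟩) hY
    have hp₁ : x₁ ≠ bar p₁ := hP.ne_bar_of_head?_eq (by simp [hx₁])
    have hq₁ : x₁ ≠ bar q₁ := hQ.ne_bar_of_head?_eq (by simp [hx₁])
    rw [signLP_cons_append_singleton O Y p₁ p₂ q₁ q₂ hY hx₁, if_neg hYinv]
    exact hO.orient_eq_one_or_neg_one (bar_injective.ne hpq₁) hp₁.symm hq₁.symm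
  · have hp₁ : x₁ ≠ bar p₁ := hP.ne_bar_of_head?_eq (by simp [hx₁])
    have hq₂ : q₂ ≠ bar (bar x₁) :=
      Reduced.ne_bar_of_getLast?_eq (w := q₁ :: wordInv Y) hQ
        (by simp [List.getLast?_cons, getLast?_wordInv, hx₁])
    rw [signLP_cons_append_singleton O _ p₁ p₂ q₁ q₂ hY hx₁, if_pos rfl]
    refine hO.orient_eq_one_or_neg_one ?_ (by simpa using hq₂) hp₁.symm
    rintro rfl
    exact hpq₂ (bar_bar p₁).symm

end ChasCW
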